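/- arXiv:2501.07429 — 5 statements merged into one kernel-verified Lean document; each statement's English description precedes it below -/
import Mathlib

section
/- With π_k > 0, μ_k ∈ ℝⁿ, and Σ_k real symmetric positive definite n×n matrices for k = 1, …, K, and A, X, B the blocks of S(π, μ, Σ), the Schur complement B − XᵀA⁻¹X equals the K×K diagonal matrix diag(π_1/(1 + π_1 μ_1ᵀΣ_1⁻¹μ_1), …, π_K/(1 + π_K μ_KᵀΣ_K⁻¹μ_K)), and this matrix is positive definite. -/
open Matrix

/-- Block `A = blockdiag (Σₖ + πₖ μₖ μₖᵀ)ₖ` of the embedding. -/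
noncomputable def gmmA {n K : ℕ} (π : Fin K → ℝ) (μ : Fin K → Fin n → ℝ)
    (Sig : Fin K → Matrix (Fin n) (Fin n) ℝ) :
    Matrix (Fin n × Fin K) (Fin n × Fin K) ℝ :=
  Matrix.blockDiagonal fun k => Sig k + π k • Matrix.vecMulVec (μ k) (μ k)

/-- Block `X`: Kn×K block-diagonal matrix whose k-th diagonal block is the column `πₖ μₖ`. -/
noncomputable def gmmX {n K : ℕ} (π : Fin K → ℝ) (μ : Fin K → Fin n → ℝ) :
    Matrix (Fin n × Fin K) (Fin K) ℝ :=
  fun p l => if p.2 = l then π p.2 * μ p.2 p.1 else 0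

/-- Block `B = diag (π₁, …, π_K)`. -/
noncomputable def gmmB {K : ℕ} (π : Fin K → ℝ) : Matrix (Fin K) (Fin K) ℝ :=
  Matrix.diagonal π

/-- The embedding matrix `S(π, μ, Σ) = [[A, X], [Xᵀ, B]]`. -/
noncomputable def gmmS {n K : ℕ} (π : Fin K → ℝ) (μ : Fin K → Fin n → ℝ)
    (Sig : Fin K → Matrix (Fin n) (Fin n) ℝ) :
    Matrix (Fin n × Fin K ⊕ Fin K) (Fin n × Fin K ⊕ Fin K) ℝ :=
  Matrix.fromBlocks (gmmA π μ Sig) (gmmX π μ) (gmmX π μ)ᵀ (gmmB π)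

/-!
The matrix `A` is block diagonal with blocks `Σₖ + πₖ μₖ μₖᵀ`, and `X` places `πₖ μₖ` in the
`k`-th block column, so `Xᵀ A⁻¹ X` is diagonal with entries `πₖ² μₖᵀ (Σₖ + πₖ μₖ μₖᵀ)⁻¹ μₖ`.
The Sherman–Morrison formula gives `(Σₖ + πₖ μₖ μₖᵀ)⁻¹ μₖ = Σₖ⁻¹ μₖ / (1 + πₖ μₖᵀ Σₖ⁻¹ μₖ)`, and
then `πₖ - πₖ² qₖ / (1 + πₖ qₖ) = πₖ / (1 + πₖ qₖ)` with `qₖ = μₖᵀ Σₖ⁻¹ μₖ ≥ 0`, which is positive.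
-/

namespace Matrix

variable {m o α : Type*} [Fintype m]

theorem PosDef.add_smul_vecMulVec_self {S : Matrix m m ℝ} (hS : S.PosDef) {c : ℝ} (hc : 0 ≤ c)
    (v : m → ℝ) : (S + c • vecMulVec v v).PosDef :=
  hS.add_posSemidef (by simpa using (posSemidef_vecMulVec_self_star v).smul hc)

variable [DecidableEq m]

theorem blockDiagonal_nonsing_inv [Fintype o] [DecidableEq o] [CommRing α]
    (M : o → Matrix m m α) (h : ∀ k, IsUnit (M k).det) :
    (blockDiagonal M)⁻¹ = blockDiagonal fun k => (M k)⁻¹ := by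
  refine inv_eq_right_inv ?_
  rw [← blockDiagonal_mul, ← blockDiagonal_one]
  exact congrArg blockDiagonal (funext fun k => mul_nonsing_inv _ (h k))

theorem add_smul_vecMulVec_inv_mulVec [Field α] {S : Matrix m m α} (c : α) (v : m → α)
    (hS : IsUnit S.det) (hA : IsUnit (S + c • vecMulVec v v).det) :
    (S + c • vecMulVec v v)⁻¹ *ᵥ v = (1 + c * (v ⬝ᵥ S⁻¹ *ᵥ v))⁻¹ • (S⁻¹ *ᵥ v) := by
  set A := S + c • vecMulVec v v
  set d := 1 + c * (v ⬝ᵥ S⁻¹ *ᵥ v)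
  have hSw : S *ᵥ (S⁻¹ *ᵥ v) = v := by rw [mulVec_mulVec, mul_nonsing_inv _ hS, one_mulVec]
  have hAw : A *ᵥ (S⁻¹ *ᵥ v) = d • v := by
    rw [add_mulVec, hSw, smul_mulVec, vecMulVec_mulVec, op_smul_eq_smul, smul_smul, add_smul,
      one_smul]
  have hw : S⁻¹ *ᵥ v = d • (A⁻¹ *ᵥ v) := by
    rw [← mulVec_smul, ← hAw, mulVec_mulVec, nonsing_inv_mul _ hA, one_mulVec]
  rcases eq_or_ne d 0 with hd | hd
  · have hv : v = 0 := by rw [← hSw, hw, hd, zero_smul, mulVec_zero]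
    simp [hv]
  · rw [hw, smul_smul, inv_mul_cancel₀ hd, one_smul]

theorem PosDef.dotProduct_inv_mulVec_nonneg {S : Matrix m m ℝ} (hS : S.PosDef) (v : m → ℝ) :
    0 ≤ v ⬝ᵥ S⁻¹ *ᵥ v := by
  simpa using hS.inv.posSemidef.dotProduct_mulVec_nonneg v

end Matrix

theorem blockDiagonal_mul_gmmX {n K : ℕ} (π : Fin K → ℝ) (μ : Fin K → Fin n → ℝ)
    (N : Fin K → Matrix (Fin n) (Fin n) ℝ) :
    blockDiagonal N * gmmX π μ = of fun p l => if p.2 = l then π l * (N l *ᵥ μ l) p.1 else 0 := by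
  ext ⟨i, k⟩ l
  simp only [mul_apply, blockDiagonal_apply, gmmX, mul_ite, ite_mul, zero_mul, mul_zero,
    Fintype.sum_prod_type, Finset.sum_ite_eq', Finset.mem_univ, ↓reduceIte, Finset.sum_ite_irrel,
    Finset.sum_const_zero, mulVec, dotProduct, Finset.mul_sum, of_apply]
  split_ifs <;> simp_all [mul_left_comm]

theorem gmmX_transpose_mul_blockDiagonal_mul_gmmX {n K : ℕ} (π : Fin K → ℝ)
    (μ : Fin K → Fin n → ℝ) (N : Fin K → Matrix (Fin n) (Fin n) ℝ) :
    (gmmX π μ)ᵀ * blockDiagonal N * gmmX π μ =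
      diagonal fun k => π k * π k * (μ k ⬝ᵥ N k *ᵥ μ k) := by
  ext l l'
  rw [Matrix.mul_assoc, blockDiagonal_mul_gmmX]
  simp only [mul_apply, transpose_apply, gmmX, of_apply, mul_ite, ite_mul, zero_mul, mul_zero,
    Fintype.sum_prod_type, Finset.sum_ite_eq', Finset.mem_univ, ↓reduceIte, Finset.sum_ite_irrel,
    Finset.sum_const_zero, dotProduct, Finset.mul_sum, diagonal_apply]
  split_ifs <;> simp_all [mul_left_comm, mul_assoc]

/-- The Schur complement `B − Xᵀ A⁻¹ X` equals the diagonal matrix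
`diag (πₖ / (1 + πₖ μₖᵀΣₖ⁻¹μₖ))ₖ`, and it is positive definite. -/
theorem gmm_schur_complement_B {n K : ℕ}
    (π : Fin K → ℝ) (μ : Fin K → Fin n → ℝ) (Sig : Fin K → Matrix (Fin n) (Fin n) ℝ)
    (hπ : ∀ k, 0 < π k) (hSig : ∀ k, (Sig k).PosDef) :
    gmmB π - (gmmX π μ)ᵀ * (gmmA π μ Sig)⁻¹ * gmmX π μ =
      Matrix.diagonal (fun k => π k / (1 + π k * (μ k ⬝ᵥ ((Sig k)⁻¹ *ᵥ μ k)))) ∧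
    (gmmB π - (gmmX π μ)ᵀ * (gmmA π μ Sig)⁻¹ * gmmX π μ).PosDef := by
  have hden : ∀ k, 0 < 1 + π k * (μ k ⬝ᵥ (Sig k)⁻¹ *ᵥ μ k) := fun k => by
    have := (hSig k).dotProduct_inv_mulVec_nonneg (μ k)
    have := hπ k
    positivity
  have hblock : ∀ k, IsUnit (Sig k + π k • vecMulVec (μ k) (μ k)).det := fun k =>
    (isUnit_iff_isUnit_det _).mp ((hSig k).add_smul_vecMulVec_self (hπ k).le (μ k)).isUnit
  have hschur : gmmB π - (gmmX π μ)ᵀ * (gmmA π μ Sig)⁻¹ * gmmX π μ =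
      diagonal fun k => π k / (1 + π k * (μ k ⬝ᵥ (Sig k)⁻¹ *ᵥ μ k)) := by
    rw [gmmA, blockDiagonal_nonsing_inv _ hblock, gmmX_transpose_mul_blockDiagonal_mul_gmmX,
      gmmB, diagonal_sub]
    refine congrArg diagonal (funext fun k => ?_)
    rw [add_smul_vecMulVec_inv_mulVec _ _ ((isUnit_iff_isUnit_det _).mp (hSig k).isUnit)
      (hblock k), dotProduct_smul, smul_eq_mul]
    field_simp [(hden k).ne']
    ring
  exact ⟨hschur, hschur ▸ posDef_diagonal_iff.mpr fun k => div_pos (hπ k) (hden k)⟩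
end

section
/- With π_k > 0, μ_k ∈ ℝⁿ, and Σ_k real symmetric positive definite n×n matrices for k = 1, …, K, the matrix S = S(π, μ, Σ) is invertible and its inverse is the block matrix S⁻¹ = [[blockdiag(Σ_1⁻¹, …, Σ_K⁻¹), −Y],[−Yᵀ, diag(π_1⁻¹ + μ_1ᵀΣ_1⁻¹μ_1, …, π_K⁻¹ + μ_KᵀΣ_K⁻¹μ_K)]], where Y is the Kn×K block-diagonal matrix with k-th diagonal block the column vector Σ_k⁻¹μ_k. -/
/-!
With `M` the Kn×K block-diagonal matrix whose k-th block is the column `μₖ`, one has `X = M B` and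
`A = blockdiag(Σₖ) + M B Mᵀ`, i.e.
`S = [[I, M], [0, I]] · [[blockdiag(Σₖ), 0], [0, B]] · [[I, 0], [Mᵀ, I]]`.
Inverting the three factors gives
`S⁻¹ = [[Σ⁻¹, -Σ⁻¹M], [-MᵀΣ⁻¹, B⁻¹ + MᵀΣ⁻¹M]]` with `Σ⁻¹ = blockdiag(Σₖ⁻¹)`; here `Σ⁻¹M = Y`,
`MᵀΣ⁻¹ = Yᵀ` because each `Σₖ⁻¹` is symmetric, and `MᵀΣ⁻¹M = diag(μₖᵀΣₖ⁻¹μₖ)`.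
-/

open Matrix

/-- `Y`: Kn×K block-diagonal matrix whose k-th diagonal block is the column `Σₖ⁻¹ μₖ`. -/
noncomputable def gmmY {n K : ℕ} (μ : Fin K → Fin n → ℝ)
    (Sig : Fin K → Matrix (Fin n) (Fin n) ℝ) :
    Matrix (Fin n × Fin K) (Fin K) ℝ :=
  fun p l => if p.2 = l then ((Sig p.2)⁻¹ *ᵥ μ p.2) p.1 else 0

theorem Matrix.fromBlocks_add_mul_mul_mul_fromBlocks_eq_one {l m R : Type*}
    [Fintype l] [Fintype m] [DecidableEq l] [DecidableEq m] [CommRing R]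
    {C C' : Matrix m m R} {B B' : Matrix l l R} (M : Matrix m l R) (N : Matrix l m R)
    (hC : C * C' = 1) (hB : B * B' = 1) :
    fromBlocks (C + M * B * N) (M * B) (B * N) B *
      fromBlocks C' (-(C' * M)) (-(N * C')) (B' + N * C' * M) = 1 := by
  have hCM : C * (C' * M) = M := by rw [← Matrix.mul_assoc, hC, Matrix.one_mul]
  rw [fromBlocks_multiply, ← fromBlocks_one]
  congr 1 <;> simp [Matrix.add_mul, Matrix.mul_add, Matrix.mul_assoc, hC, hB, hCM]

def gmmM {n K : ℕ} (μ : Fin K → Fin n → ℝ) : Matrix (Fin n × Fin K) (Fin K) ℝ :=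
  fun p l => if p.2 = l then μ p.2 p.1 else 0

section
variable {n K : ℕ} (μ : Fin K → Fin n → ℝ)

theorem gmmX_eq_gmmM_mul (π : Fin K → ℝ) : gmmX π μ = gmmM μ * diagonal π := by
  ext ⟨i, k⟩ l
  simp only [gmmX, gmmM, mul_diagonal]
  grind

theorem gmmA_eq (π : Fin K → ℝ) (Sig : Fin K → Matrix (Fin n) (Fin n) ℝ) :
    gmmA π μ Sig = blockDiagonal Sig + gmmM μ * diagonal π * (gmmM μ)ᵀ := by
  ext ⟨i, k⟩ ⟨j, l⟩
  rcases eq_or_ne k l with rfl | hkl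
  · simp [gmmA, gmmM, mul_apply, vecMulVec_apply]
    ring
  · simp [gmmA, gmmM, mul_apply, blockDiagonal_apply, hkl]

theorem gmmY_eq_blockDiagonal_mul (Sig : Fin K → Matrix (Fin n) (Fin n) ℝ) :
    gmmY μ Sig = blockDiagonal (fun k => (Sig k)⁻¹) * gmmM μ := by
  ext ⟨i, k⟩ l
  rcases eq_or_ne k l with rfl | hkl
  · simp [gmmY, gmmM, mul_apply, Fintype.sum_prod_type, mulVec, dotProduct]
  · simp [gmmY, gmmM, mul_apply, blockDiagonal_apply, Fintype.sum_prod_type, hkl]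

theorem gmmM_transpose_mul_blockDiagonal_mul (C : Fin K → Matrix (Fin n) (Fin n) ℝ) :
    (gmmM μ)ᵀ * blockDiagonal C * gmmM μ = diagonal fun k => μ k ⬝ᵥ (C k *ᵥ μ k) := by
  ext k l
  rcases eq_or_ne k l with rfl | hkl
  · rw [diagonal_apply_eq, dotProduct_mulVec]
    simp [gmmM, mul_apply, Fintype.sum_prod_type, vecMul, dotProduct]
  · simp [gmmM, mul_apply, blockDiagonal_apply, Fintype.sum_prod_type, hkl, hkl.symm]
end

/-- `S` is invertible with
`S⁻¹ = [[blockdiag (Σₖ⁻¹)ₖ, −Y], [−Yᵀ, diag (πₖ⁻¹ + μₖᵀΣₖ⁻¹μₖ)ₖ]]`. -/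
theorem gmmS_inv {n K : ℕ}
    (π : Fin K → ℝ) (μ : Fin K → Fin n → ℝ) (Sig : Fin K → Matrix (Fin n) (Fin n) ℝ)
    (hπ : ∀ k, 0 < π k) (hSig : ∀ k, (Sig k).PosDef) :
    IsUnit (gmmS π μ Sig) ∧
    (gmmS π μ Sig)⁻¹ =
      Matrix.fromBlocks (Matrix.blockDiagonal fun k => (Sig k)⁻¹) (-(gmmY μ Sig))
        (-(gmmY μ Sig))ᵀ
        (Matrix.diagonal fun k => (π k)⁻¹ + μ k ⬝ᵥ ((Sig k)⁻¹ *ᵥ μ k)) := by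
  set M := gmmM μ
  set SigInv := blockDiagonal fun k => (Sig k)⁻¹
  have hSigInv : blockDiagonal Sig * SigInv = 1 := by
    rw [← blockDiagonal_mul, ← blockDiagonal_one]
    exact congrArg blockDiagonal (funext fun k => mul_nonsing_inv _ (hSig k).det_pos.ne'.isUnit)
  have hSigInv_symm : SigInvᵀ = SigInv := by
    rw [blockDiagonal_transpose]
    exact congrArg blockDiagonal (funext fun k => by simpa using (hSig k).isHermitian.inv.eq)
  have hπInv : diagonal π * diagonal (fun k => (π k)⁻¹) = 1 := by
    rw [diagonal_mul_diagonal, ← diagonal_one]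
    exact congrArg diagonal (funext fun k => mul_inv_cancel₀ (hπ k).ne')
  have hS : gmmS π μ Sig =
      fromBlocks (blockDiagonal Sig + M * diagonal π * Mᵀ) (M * diagonal π) (diagonal π * Mᵀ)
        (diagonal π) := by
    rw [gmmS, gmmA_eq, gmmX_eq_gmmM_mul, transpose_mul, diagonal_transpose, gmmB]
  have hInv : fromBlocks SigInv (-(gmmY μ Sig)) (-(gmmY μ Sig))ᵀ
        (diagonal fun k => (π k)⁻¹ + μ k ⬝ᵥ ((Sig k)⁻¹ *ᵥ μ k)) =
      fromBlocks SigInv (-(SigInv * M)) (-(Mᵀ * SigInv))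
        (diagonal (fun k => (π k)⁻¹) + Mᵀ * SigInv * M) := by
    rw [gmmY_eq_blockDiagonal_mul, gmmM_transpose_mul_blockDiagonal_mul, transpose_neg,
      transpose_mul, hSigInv_symm, diagonal_add]
  have hmul := fromBlocks_add_mul_mul_mul_fromBlocks_eq_one M Mᵀ hSigInv hπInv
  rw [← hS, ← hInv] at hmul
  exact ⟨(isUnit_iff_isUnit_det _).mpr (isUnit_det_of_right_inverse hmul), inv_eq_right_inv hmul⟩
end

section
/- Fix π_k > 0, μ_k ∈ ℝⁿ, Σ_k real symmetric positive definite n×n matrices for k = 1, …, K, and perturbation data t_k ∈ ℝ, v_k ∈ ℝⁿ, and T_k real symmetric n×n matrices. Define dS = [[dA, dX],[dXᵀ, dB]] with dA = blockdiag(T_k + t_k μ_kμ_kᵀ + π_k v_kμ_kᵀ + π_k μ_kv_kᵀ)_{k=1}^K, dX the Kn×K block-diagonal matrix with k-th diagonal block the column vector t_k μ_k + π_k v_k, and dB = diag(t_1, …, t_K). Then S⁻¹ dS = [[C, D],[E, F]] where C = blockdiag(Σ_k⁻¹T_k + π_k Σ_k⁻¹ v_k μ_kᵀ)_{k=1}^K,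 D is the Kn×K block-diagonal matrix with k-th block the column vector π_k Σ_k⁻¹ v_k, E is the K×Kn block-diagonal matrix with k-th block the row vector v_kᵀ + (t_k/π_k) μ_kᵀ − μ_kᵀΣ_k⁻¹T_k − π_k μ_kᵀΣ_k⁻¹v_k μ_kᵀ, and F = diag(t_k/π_k − π_k μ_kᵀΣ_k⁻¹v_k)_{k=1}^K. -/
open Matrix

/-- Block `dA = blockdiag (Tₖ + tₖ μₖμₖᵀ + πₖ vₖμₖᵀ + πₖ μₖvₖᵀ)ₖ`:
the differential of `A` in direction `(tₖ, vₖ, Tₖ)`. -/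
noncomputable def gmmdA {n K : ℕ} (π : Fin K → ℝ) (μ : Fin K → Fin n → ℝ)
    (t : Fin K → ℝ) (v : Fin K → Fin n → ℝ) (T : Fin K → Matrix (Fin n) (Fin n) ℝ) :
    Matrix (Fin n × Fin K) (Fin n × Fin K) ℝ :=
  Matrix.blockDiagonal fun k =>
    T k + t k • Matrix.vecMulVec (μ k) (μ k) + π k • Matrix.vecMulVec (v k) (μ k)
      + π k • Matrix.vecMulVec (μ k) (v k)

/-- Block `dX`: Kn×K block-diagonal matrix with k-th diagonal block the column
`tₖ μₖ + πₖ vₖ`. -/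
noncomputable def gmmdX {n K : ℕ} (π : Fin K → ℝ) (μ : Fin K → Fin n → ℝ)
    (t : Fin K → ℝ) (v : Fin K → Fin n → ℝ) :
    Matrix (Fin n × Fin K) (Fin K) ℝ :=
  fun p l => if p.2 = l then t p.2 * μ p.2 p.1 + π p.2 * v p.2 p.1 else 0

/-- The differential `dS = [[dA, dX], [dXᵀ, dB]]` of `S` in direction `(t, v, T)`,
with `dB = diag (t₁, …, t_K)`. -/
noncomputable def gmmdS {n K : ℕ} (π : Fin K → ℝ) (μ : Fin K → Fin n → ℝ)
    (t : Fin K → ℝ) (v : Fin K → Fin n → ℝ) (T : Fin K → Matrix (Fin n) (Fin n) ℝ) :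
    Matrix (Fin n × Fin K ⊕ Fin K) (Fin n × Fin K ⊕ Fin K) ℝ :=
  Matrix.fromBlocks (gmmdA π μ t v T) (gmmdX π μ t v) (gmmdX π μ t v)ᵀ
    (Matrix.diagonal t)

/-!
Every block of `S`, of `dS` and of the claimed `S⁻¹ dS` is block diagonal in the component index
`k` (the off-diagonal blocks having a single column, resp. row, per component). Hence
`S * Y = dS` for the claimed `Y` splits into four identities per component, each a short
computation with rank-one matrices using only `Σₖ Σₖ⁻¹ = 1`. Invertibility of `S` comes from its
Schur complement with respect to `B = diag π`, which is `blockdiag Σₖ`.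
-/

namespace Matrix

variable {R m o : Type*} [DecidableEq o]

section Zero
variable [Zero R]

def colBlockDiagonal (d : o → m → R) : Matrix (m × o) o R :=
  of fun p l => if p.2 = l then d p.2 p.1 else 0

def rowBlockDiagonal (d : o → m → R) : Matrix o (m × o) R :=
  of fun l p => if p.2 = l then d l p.1 else 0

theorem transpose_colBlockDiagonal (d : o → m → R) :
    (colBlockDiagonal d)ᵀ = rowBlockDiagonal d := by
  ext l ⟨i, k⟩
  obtain rfl | hkl := eq_or_ne k l <;> simp [colBlockDiagonal, rowBlockDiagonal, *]

end Zero

section AddZeroClass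
variable [AddZeroClass R]

theorem colBlockDiagonal_add (d e : o → m → R) :
    colBlockDiagonal (d + e) = colBlockDiagonal d + colBlockDiagonal e := by
  ext ⟨i, k⟩ l
  obtain rfl | hkl := eq_or_ne k l <;> simp [colBlockDiagonal, *]

theorem rowBlockDiagonal_add (d e : o → m → R) :
    rowBlockDiagonal (d + e) = rowBlockDiagonal d + rowBlockDiagonal e := by
  ext l ⟨i, k⟩
  obtain rfl | hkl := eq_or_ne k l <;> simp [rowBlockDiagonal, *]

end AddZeroClass

variable [CommSemiring R] [Fintype o]

theorem colBlockDiagonal_mul_diagonal (d : o → m → R) (c : o → R) :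
    colBlockDiagonal d * diagonal c = colBlockDiagonal fun k => c k • d k := by
  ext ⟨i, k⟩ l
  obtain rfl | hkl := eq_or_ne k l <;> simp [colBlockDiagonal, mul_comm, *]

theorem diagonal_mul_rowBlockDiagonal (c : o → R) (d : o → m → R) :
    diagonal c * rowBlockDiagonal d = rowBlockDiagonal fun k => c k • d k := by
  ext l ⟨j, k⟩
  obtain rfl | hkl := eq_or_ne k l <;> simp [rowBlockDiagonal, *]

theorem colBlockDiagonal_mul_rowBlockDiagonal (d e : o → m → R) :
    colBlockDiagonal d * rowBlockDiagonal e = blockDiagonal fun k => vecMulVec (d k) (e k) := by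
  ext ⟨i, k⟩ ⟨j, l⟩
  obtain rfl | hkl := eq_or_ne k l <;>
    simp [mul_apply, colBlockDiagonal, rowBlockDiagonal, vecMulVec_apply, ite_mul, mul_ite,
      blockDiagonal_apply, *]

variable [Fintype m]

theorem blockDiagonal_mul_colBlockDiagonal (M : o → Matrix m m R) (d : o → m → R) :
    blockDiagonal M * colBlockDiagonal d = colBlockDiagonal fun k => M k *ᵥ d k := by
  ext ⟨i, k⟩ l
  obtain rfl | hkl := eq_or_ne k l <;>
    simp [mul_apply, colBlockDiagonal, blockDiagonal_apply, Fintype.sum_prod_type, mulVec,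
      dotProduct, ite_mul, mul_ite, *]

theorem rowBlockDiagonal_mul_blockDiagonal (d : o → m → R) (M : o → Matrix m m R) :
    rowBlockDiagonal d * blockDiagonal M = rowBlockDiagonal fun k => d k ᵥ* M k := by
  ext l ⟨j, k⟩
  obtain rfl | hkl := eq_or_ne k l <;>
    simp [mul_apply, rowBlockDiagonal, blockDiagonal_apply, Fintype.sum_prod_type, vecMul,
      dotProduct, ite_mul, mul_ite, *]

theorem rowBlockDiagonal_mul_colBlockDiagonal (d e : o → m → R) :
    rowBlockDiagonal d * colBlockDiagonal e = diagonal fun k => d k ⬝ᵥ e k := by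
  ext k l
  obtain rfl | hkl := eq_or_ne k l
  · simp [mul_apply, colBlockDiagonal, rowBlockDiagonal, dotProduct, Fintype.sum_prod_type]
  · simp [mul_apply, colBlockDiagonal, rowBlockDiagonal, Fintype.sum_prod_type, hkl, hkl.symm]

end Matrix

section Component

/- The four blocks of `s * y = ds` for a single component, where
`s = [[S + p μμᵀ, p μ], [p μᵀ, p]]` and `ds`, `y` are the `k`-th components of `dS`, `S⁻¹ dS`. -/

variable {𝕜 m : Type*} [Field 𝕜] [Fintype m] [DecidableEq m]
  (S T : Matrix m m 𝕜) (μ v : m → 𝕜) {p : 𝕜} (t : 𝕜)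

theorem component_mul_eq₁₁ (hp : p ≠ 0) (hS : IsUnit S.det) :
    (S + p • vecMulVec μ μ) * (S⁻¹ * T + p • vecMulVec (S⁻¹ *ᵥ v) μ)
      + vecMulVec (p • μ) (v + (t / p) • μ - μ ᵥ* (S⁻¹ * T) - (p * (μ ⬝ᵥ (S⁻¹ *ᵥ v))) • μ)
    = T + t • vecMulVec μ μ + p • vecMulVec v μ + p • vecMulVec μ v := by
  have hv : S *ᵥ (S⁻¹ *ᵥ v) = v := by rw [mulVec_mulVec, mul_nonsing_inv _ hS, one_mulVec]
  simp only [Matrix.add_mul, Matrix.mul_add, Matrix.mul_smul, Matrix.smul_mul,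
    mul_nonsing_inv_cancel_left _ _ hS, mul_vecMulVec, vecMulVec_mul,
    vecMulVec_mulVec, op_smul_eq_smul, add_vecMulVec, vecMulVec_add, vecMulVec_sub, vecMulVec_smul,
    smul_vecMulVec, smul_smul, Matrix.add_mulVec, Matrix.smul_mulVec, hv]
  match_scalars <;> field_simp <;> ring

theorem component_mul_eq₁₂ (hp : p ≠ 0) (hS : IsUnit S.det) :
    (S + p • vecMulVec μ μ) *ᵥ (p • (S⁻¹ *ᵥ v)) + (t / p - p * (μ ⬝ᵥ (S⁻¹ *ᵥ v))) • (p • μ)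
    = t • μ + p • v := by
  have hv : S *ᵥ (S⁻¹ *ᵥ v) = v := by rw [mulVec_mulVec, mul_nonsing_inv _ hS, one_mulVec]
  simp only [Matrix.add_mulVec, mulVec_smul, Matrix.smul_mulVec, vecMulVec_mulVec,
    op_smul_eq_smul, hv, smul_smul]
  match_scalars <;> field_simp
  ring

theorem component_mul_eq₂₁ (hp : p ≠ 0) :
    (p • μ) ᵥ* (S⁻¹ * T + p • vecMulVec (S⁻¹ *ᵥ v) μ)
      + p • (v + (t / p) • μ - μ ᵥ* (S⁻¹ * T) - (p * (μ ⬝ᵥ (S⁻¹ *ᵥ v))) • μ)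
    = t • μ + p • v := by
  simp only [vecMul_add, smul_vecMul, vecMul_smul, vecMul_vecMulVec, smul_dotProduct, smul_smul,
    smul_eq_mul]
  match_scalars <;> field_simp <;> ring

theorem component_mul_eq₂₂ (hp : p ≠ 0) :
    (p • μ) ⬝ᵥ (p • (S⁻¹ *ᵥ v)) + p * (t / p - p * (μ ⬝ᵥ (S⁻¹ *ᵥ v))) = t := by
  simp only [dotProduct_smul, smul_dotProduct, smul_eq_mul]
  field_simp
  ring

end Component

section GMM

variable {n K : ℕ} (π : Fin K → ℝ) (μ : Fin K → Fin n → ℝ)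
  (Sig : Fin K → Matrix (Fin n) (Fin n) ℝ)

theorem gmmX_eq_colBlockDiagonal : gmmX π μ = colBlockDiagonal fun k => π k • μ k := rfl

theorem gmmdX_eq_colBlockDiagonal (t : Fin K → ℝ) (v : Fin K → Fin n → ℝ) :
    gmmdX π μ t v = colBlockDiagonal fun k => t k • μ k + π k • v k := rfl

variable {π}

theorem gmmB_mul_diagonal_inv (hπ : ∀ k, π k ≠ 0) :
    gmmB π * diagonal (fun k => (π k)⁻¹) = 1 := by
  rw [gmmB, diagonal_mul_diagonal, ← diagonal_one]
  exact congrArg diagonal (funext fun k => mul_inv_cancel₀ (hπ k))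

theorem gmmA_sub_schur_eq_blockDiagonal (hπ : ∀ k, π k ≠ 0) :
    gmmA π μ Sig - gmmX π μ * diagonal (fun k => (π k)⁻¹) * (gmmX π μ)ᵀ = blockDiagonal Sig := by
  rw [gmmX_eq_colBlockDiagonal, transpose_colBlockDiagonal, colBlockDiagonal_mul_diagonal,
    colBlockDiagonal_mul_rowBlockDiagonal, gmmA, ← blockDiagonal_sub]
  refine congrArg blockDiagonal (funext fun k => ?_)
  rw [Pi.sub_apply, smul_smul, inv_mul_cancel₀ (hπ k), one_smul, vecMulVec_smul,
    add_sub_cancel_right]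

theorem isUnit_det_gmmS (hπ : ∀ k, π k ≠ 0) (hSig : ∀ k, IsUnit (Sig k).det) :
    IsUnit (gmmS π μ Sig).det := by
  have hB := gmmB_mul_diagonal_inv hπ
  let _ := invertibleOfRightInverse _ _ hB
  rw [gmmS, det_fromBlocks₂₂, invOf_eq_right_inv hB, gmmA_sub_schur_eq_blockDiagonal μ Sig hπ,
    det_blockDiagonal]
  exact (isUnit_det_of_invertible _).mul (IsUnit.prod_univ_iff.mpr hSig)

theorem gmmS_mul_eq_gmmdS (t : Fin K → ℝ) (v : Fin K → Fin n → ℝ)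
    (T : Fin K → Matrix (Fin n) (Fin n) ℝ) (hπ : ∀ k, π k ≠ 0) (hSig : ∀ k, IsUnit (Sig k).det) :
    gmmS π μ Sig * fromBlocks
        (blockDiagonal fun k => (Sig k)⁻¹ * T k + π k • vecMulVec ((Sig k)⁻¹ *ᵥ v k) (μ k))
        (colBlockDiagonal fun k => π k • ((Sig k)⁻¹ *ᵥ v k))
        (rowBlockDiagonal fun k => v k + (t k / π k) • μ k - μ k ᵥ* ((Sig k)⁻¹ * T k)
          - (π k * (μ k ⬝ᵥ ((Sig k)⁻¹ *ᵥ v k))) • μ k)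
        (diagonal fun k => t k / π k - π k * (μ k ⬝ᵥ ((Sig k)⁻¹ *ᵥ v k)))
      = gmmdS π μ t v T := by
  rw [gmmS, gmmdS, gmmA, gmmB, gmmdA, gmmX_eq_colBlockDiagonal, gmmdX_eq_colBlockDiagonal,
    transpose_colBlockDiagonal, transpose_colBlockDiagonal, fromBlocks_multiply]
  refine fromBlocks_inj.mpr ⟨?_, ?_, ?_, ?_⟩
  · rw [← blockDiagonal_mul, colBlockDiagonal_mul_rowBlockDiagonal, ← blockDiagonal_add]
    exact congrArg blockDiagonal (funext fun k => component_mul_eq₁₁ _ _ _ _ _ (hπ k) (hSig k))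
  · rw [blockDiagonal_mul_colBlockDiagonal, colBlockDiagonal_mul_diagonal, ← colBlockDiagonal_add]
    exact congrArg colBlockDiagonal (funext fun k => component_mul_eq₁₂ _ _ _ _ (hπ k) (hSig k))
  · rw [rowBlockDiagonal_mul_blockDiagonal, diagonal_mul_rowBlockDiagonal, ← rowBlockDiagonal_add]
    exact congrArg rowBlockDiagonal (funext fun k => component_mul_eq₂₁ _ _ _ _ _ (hπ k))
  · rw [rowBlockDiagonal_mul_colBlockDiagonal, diagonal_mul_diagonal, diagonal_add]
    exact congrArg diagonal (funext fun k => component_mul_eq₂₂ _ _ _ _ (hπ k))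

end GMM

theorem gmmS_inv_mul_dS_general {n K : ℕ}
    (π : Fin K → ℝ) (μ : Fin K → Fin n → ℝ) (Sig : Fin K → Matrix (Fin n) (Fin n) ℝ)
    (t : Fin K → ℝ) (v : Fin K → Fin n → ℝ) (T : Fin K → Matrix (Fin n) (Fin n) ℝ)
    (hπ : ∀ k, 0 < π k) (hSig : ∀ k, (Sig k).PosDef) :
    (gmmS π μ Sig)⁻¹ * gmmdS π μ t v T =
      Matrix.fromBlocks
        (Matrix.blockDiagonal fun k =>
          (Sig k)⁻¹ * T k + π k • Matrix.vecMulVec ((Sig k)⁻¹ *ᵥ v k) (μ k))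
        (fun p l => if p.2 = l then π p.2 * ((Sig p.2)⁻¹ *ᵥ v p.2) p.1 else 0)
        (fun l p => if p.2 = l then
            v l p.1 + (t l / π l) * μ l p.1 - (μ l ᵥ* ((Sig l)⁻¹ * T l)) p.1
              - π l * (μ l ⬝ᵥ ((Sig l)⁻¹ *ᵥ v l)) * μ l p.1
          else 0)
        (Matrix.diagonal fun k => t k / π k - π k * (μ k ⬝ᵥ ((Sig k)⁻¹ *ᵥ v k))) := by
  have hπ₀ : ∀ k, π k ≠ 0 := fun k => (hπ k).ne'
  have hSig₀ : ∀ k, IsUnit (Sig k).det := fun k => (isUnit_iff_isUnit_det _).mp (hSig k).isUnit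
  rw [← gmmS_mul_eq_gmmdS μ Sig t v T hπ₀ hSig₀,
    nonsing_inv_mul_cancel_left _ _ (isUnit_det_gmmS μ Sig hπ₀ hSig₀)]
  rfl

/-- `S⁻¹ dS = [[C, D], [E, F]]` with the blocks as computed in the paper. -/
theorem gmmS_inv_mul_dS {n K : ℕ}
    (π : Fin K → ℝ) (μ : Fin K → Fin n → ℝ) (Sig : Fin K → Matrix (Fin n) (Fin n) ℝ)
    (t : Fin K → ℝ) (v : Fin K → Fin n → ℝ) (T : Fin K → Matrix (Fin n) (Fin n) ℝ)
    (hπ : ∀ k, 0 < π k) (hSig : ∀ k, (Sig k).PosDef) (hT : ∀ k, (T k).IsSymm) :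
    (gmmS π μ Sig)⁻¹ * gmmdS π μ t v T =
      Matrix.fromBlocks
        (Matrix.blockDiagonal fun k =>
          (Sig k)⁻¹ * T k + π k • Matrix.vecMulVec ((Sig k)⁻¹ *ᵥ v k) (μ k))
        (fun p l => if p.2 = l then π p.2 * ((Sig p.2)⁻¹ *ᵥ v p.2) p.1 else 0)
        (fun l p => if p.2 = l then
            v l p.1 + (t l / π l) * μ l p.1 - (μ l ᵥ* ((Sig l)⁻¹ * T l)) p.1
              - π l * (μ l ⬝ᵥ ((Sig l)⁻¹ *ᵥ v l)) * μ l p.1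
          else 0)
        (Matrix.diagonal fun k => t k / π k - π k * (μ k ⬝ᵥ ((Sig k)⁻¹ *ᵥ v k))) :=
  gmmS_inv_mul_dS_general π μ Sig t v T hπ hSig
end

section
/- Fix π_k > 0, μ_k ∈ ℝⁿ, Σ_k real symmetric positive definite n×n matrices for k = 1, …, K, and perturbation data t_k ∈ ℝ, v_k ∈ ℝⁿ, and T_k real symmetric n×n matrices. With dS defined as the block matrix [[dA, dX],[dXᵀ, dB]], dA = blockdiag(T_k + t_k μ_kμ_kᵀ + π_k v_kμ_kᵀ + π_k μ_kv_kᵀ), dX the Kn×K block-diagonal matrix with k-th block the column vector t_k μ_k + π_k v_k, dB = diag(t_1, …, t_K), one has (1/2)·Tr((S⁻¹ dS)²) = Σ_{k=1}^{K} [ (1/2)(t_k/π_k)² + π_k v_kᵀΣ_k⁻¹v_k + (1/2)·Tr((Σ_k⁻¹ T_k)²) ]. -/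
/-!
Grouping coordinates by mixture component, `S` is the direct sum of the matrices
`Sₖ = [[Σₖ + πₖ μₖμₖᵀ, πₖ μₖ], [πₖ μₖᵀ, πₖ]]`, which factor as `Sₖ = Lₖ Dₖ Lₖᵀ` with
`Lₖ = [[1, μₖ], [0, 1]]` and `Dₖ = diag (Σₖ, πₖ)`. The same `Lₖ` gives `dSₖ = Lₖ Yₖ Lₖᵀ` with
`Yₖ = [[Tₖ, πₖ vₖ], [πₖ vₖᵀ, tₖ]]`, so `S⁻¹ dS` is conjugate to the direct sum of
`Dₖ⁻¹ Yₖ = [[Σₖ⁻¹ Tₖ, πₖ Σₖ⁻¹ vₖ], [vₖᵀ, tₖ / πₖ]]`, whose squares have trace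
`Tr ((Σₖ⁻¹ Tₖ)²) + 2 πₖ vₖᵀ Σₖ⁻¹ vₖ + (tₖ / πₖ)²`.
-/

open Matrix

namespace Matrix

section Trace

variable {α m : Type*} [Fintype m] [DecidableEq m] [CommRing α]

theorem trace_pow_inv_mul_conj {L R : Matrix m m α} (hL : IsUnit L.det)
    (hR : IsUnit R.det) (D Y : Matrix m m α) (k : ℕ) :
    trace (((L * D * R)⁻¹ * (L * Y * R)) ^ k) = trace ((D⁻¹ * Y) ^ k) := by
  obtain ⟨u, rfl⟩ := (isUnit_iff_isUnit_det R).2 hR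
  have hconj : (L * D * u)⁻¹ * (L * Y * u) = (u : Matrix m m α)⁻¹ * (D⁻¹ * Y) * u := by
    simp only [mul_inv_rev, Matrix.mul_assoc, nonsing_inv_mul_cancel_left _ _ hL]
  rw [hconj, ← coe_units_inv, Units.conj_pow', trace_units_conj']

end Trace

theorem trace_fromBlocks {α m n : Type*} [Fintype m] [Fintype n] [AddCommMonoid α]
    (A : Matrix m m α) (B : Matrix m n α) (C : Matrix n m α) (D : Matrix n n α) :
    trace (fromBlocks A B C D) = trace A + trace D := by
  simp [trace, Fintype.sum_sum_type]

section CommSemiring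

variable {α m o : Type*} [CommSemiring α] [DecidableEq o]

def blockDiagonalCol (f : o → m → α) : Matrix (m × o) o α :=
  fun p l => if p.2 = l then f p.2 p.1 else 0

/-- After grouping coordinates by `k`, this is the direct sum of the blocks
`[[M k, f k], [(g k)ᵀ, d k]]`. -/
def blockDiagonalFromBlocks (M : o → Matrix m m α) (f g : o → m → α) (d : o → α) :
    Matrix (m × o ⊕ o) (m × o ⊕ o) α :=
  fromBlocks (blockDiagonal M) (blockDiagonalCol f) (blockDiagonalCol g)ᵀ (diagonal d)

@[simp]
theorem blockDiagonalCol_zero : blockDiagonalCol (0 : o → m → α) = 0 := by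
  ext p l; simp [blockDiagonalCol]

theorem blockDiagonalCol_add (f g : o → m → α) :
    blockDiagonalCol (fun k => f k + g k) = blockDiagonalCol f + blockDiagonalCol g := by
  ext p l; by_cases h : p.2 = l <;> simp [blockDiagonalCol, h]

theorem blockDiagonalFromBlocks_one [DecidableEq m] :
    blockDiagonalFromBlocks (1 : o → Matrix m m α) 0 0 1 = 1 := by
  simp [blockDiagonalFromBlocks, blockDiagonal_one, fromBlocks_one]

variable [Fintype o]

theorem blockDiagonalCol_mul_diagonal (f : o → m → α) (d : o → α) :
    blockDiagonalCol f * diagonal d = blockDiagonalCol fun k => d k • f k := by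
  ext ⟨i, k⟩ l
  rcases eq_or_ne k l with rfl | h
  · simp [blockDiagonalCol, mul_comm]
  · simp [blockDiagonalCol, h]

theorem diagonal_mul_transpose_blockDiagonalCol (d : o → α) (g : o → m → α) :
    diagonal d * (blockDiagonalCol g)ᵀ = (blockDiagonalCol fun k => d k • g k)ᵀ := by
  rw [← diagonal_transpose, ← transpose_mul, blockDiagonalCol_mul_diagonal]

theorem blockDiagonalCol_mul_transpose (f g : o → m → α) :
    blockDiagonalCol f * (blockDiagonalCol g)ᵀ =
      blockDiagonal fun k => vecMulVec (f k) (g k) := by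
  ext ⟨i, k⟩ ⟨j, l⟩
  rcases eq_or_ne k l with rfl | h
  · simp [mul_apply, blockDiagonalCol, vecMulVec_apply]
  · simp [mul_apply, blockDiagonalCol, blockDiagonal_apply_ne _ _ _ h, h]

variable [Fintype m]

theorem blockDiagonal_mul_blockDiagonalCol (M : o → Matrix m m α) (f : o → m → α) :
    blockDiagonal M * blockDiagonalCol f = blockDiagonalCol fun k => M k *ᵥ f k := by
  ext ⟨i, k⟩ l
  simp only [mul_apply, blockDiagonalCol, blockDiagonal_apply, Fintype.sum_prod_type, mulVec,
    dotProduct]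
  rcases eq_or_ne k l with rfl | h
  · simp
  · simp [h]

theorem transpose_blockDiagonalCol_mul_blockDiagonal (g : o → m → α) (M : o → Matrix m m α) :
    (blockDiagonalCol g)ᵀ * blockDiagonal M = (blockDiagonalCol fun k => g k ᵥ* M k)ᵀ := by
  rw [← transpose_transpose (blockDiagonal M), ← transpose_mul, blockDiagonal_transpose,
    blockDiagonal_mul_blockDiagonalCol]
  simp only [mulVec_transpose]

theorem transpose_blockDiagonalCol_mul (g f : o → m → α) :
    (blockDiagonalCol g)ᵀ * blockDiagonalCol f = diagonal fun k => g k ⬝ᵥ f k := by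
  ext k l
  rcases eq_or_ne k l with rfl | h
  · simp [mul_apply, blockDiagonalCol, dotProduct, Fintype.sum_prod_type]
  · simp [mul_apply, blockDiagonalCol, Fintype.sum_prod_type, h, Ne.symm h]

theorem blockDiagonalFromBlocks_mul (M M' : o → Matrix m m α) (f g f' g' : o → m → α)
    (d d' : o → α) :
    blockDiagonalFromBlocks M f g d * blockDiagonalFromBlocks M' f' g' d' =
      blockDiagonalFromBlocks (fun k => M k * M' k + vecMulVec (f k) (g' k))
        (fun k => M k *ᵥ f' k + d' k • f k) (fun k => g k ᵥ* M' k + d k • g' k)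
        (fun k => g k ⬝ᵥ f' k + d k * d' k) := by
  simp only [blockDiagonalFromBlocks, fromBlocks_multiply, fromBlocks_inj]
  refine ⟨?_, ?_, ?_, ?_⟩
  · rw [← blockDiagonal_mul, blockDiagonalCol_mul_transpose, ← blockDiagonal_add]; rfl
  · rw [blockDiagonal_mul_blockDiagonalCol, blockDiagonalCol_mul_diagonal,
      ← blockDiagonalCol_add]
  · rw [transpose_blockDiagonalCol_mul_blockDiagonal, diagonal_mul_transpose_blockDiagonalCol,
      ← transpose_add, ← blockDiagonalCol_add]
  · rw [transpose_blockDiagonalCol_mul, diagonal_mul_diagonal, diagonal_add]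

theorem trace_blockDiagonalFromBlocks (M : o → Matrix m m α) (f g : o → m → α) (d : o → α) :
    trace (blockDiagonalFromBlocks M f g d) = ∑ k, (trace (M k) + d k) := by
  rw [blockDiagonalFromBlocks, trace_fromBlocks, trace_blockDiagonal, trace_diagonal,
    Finset.sum_add_distrib]

theorem trace_blockDiagonalFromBlocks_sq [DecidableEq m] (M : o → Matrix m m α)
    (f g : o → m → α) (d : o → α) :
    trace (blockDiagonalFromBlocks M f g d ^ 2) =
      ∑ k, (trace (M k ^ 2) + 2 * (g k ⬝ᵥ f k) + d k ^ 2) := by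
  rw [sq, blockDiagonalFromBlocks_mul, trace_blockDiagonalFromBlocks]
  refine Finset.sum_congr rfl fun k _ => ?_
  rw [trace_add, trace_vecMulVec, dotProduct_comm (f k), sq, sq]
  ring

end CommSemiring

variable {α m o : Type*} [Fintype m] [Fintype o] [DecidableEq m] [DecidableEq o]

theorem det_blockDiagonalFromBlocks_zero₂₁ [CommRing α] (M : o → Matrix m m α) (f : o → m → α)
    (d : o → α) : (blockDiagonalFromBlocks M f 0 d).det = (∏ k, (M k).det) * ∏ k, d k := by
  simp [blockDiagonalFromBlocks, det_fromBlocks_zero₂₁, det_blockDiagonal]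

theorem det_blockDiagonalFromBlocks_zero₁₂ [CommRing α] (M : o → Matrix m m α) (g : o → m → α)
    (d : o → α) : (blockDiagonalFromBlocks M 0 g d).det = (∏ k, (M k).det) * ∏ k, d k := by
  simp [blockDiagonalFromBlocks, det_fromBlocks_zero₁₂, det_blockDiagonal]

theorem inv_blockDiagonalFromBlocks_zero_zero [Field α] (M : o → Matrix m m α) (d : o → α)
    (hM : ∀ k, IsUnit (M k).det) (hd : ∀ k, d k ≠ 0) :
    (blockDiagonalFromBlocks M 0 0 d)⁻¹ = blockDiagonalFromBlocks (fun k => (M k)⁻¹) 0 0 d⁻¹ := by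
  refine inv_eq_right_inv ?_
  rw [blockDiagonalFromBlocks_mul, ← blockDiagonalFromBlocks_one]
  congr 1 <;> funext k <;> simp [mul_nonsing_inv _ (hM k), hd k]

end Matrix

theorem gmmS_eq_mul_mul {n K : ℕ} (π : Fin K → ℝ) (μ : Fin K → Fin n → ℝ)
    (Sig : Fin K → Matrix (Fin n) (Fin n) ℝ) :
    gmmS π μ Sig = blockDiagonalFromBlocks 1 μ 0 1 * blockDiagonalFromBlocks Sig 0 0 π *
      blockDiagonalFromBlocks 1 0 μ 1 := by
  rw [blockDiagonalFromBlocks_mul, blockDiagonalFromBlocks_mul]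
  change blockDiagonalFromBlocks (fun k => Sig k + π k • vecMulVec (μ k) (μ k))
    (fun k => π k • μ k) (fun k => π k • μ k) π = _
  congr 1 <;> funext k <;> simp [smul_vecMulVec]

theorem gmmdS_eq_mul_mul {n K : ℕ} (π : Fin K → ℝ) (μ : Fin K → Fin n → ℝ)
    (t : Fin K → ℝ) (v : Fin K → Fin n → ℝ) (T : Fin K → Matrix (Fin n) (Fin n) ℝ) :
    gmmdS π μ t v T = blockDiagonalFromBlocks 1 μ 0 1 *
      blockDiagonalFromBlocks T (fun k => π k • v k) (fun k => π k • v k) t *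
      blockDiagonalFromBlocks 1 0 μ 1 := by
  rw [blockDiagonalFromBlocks_mul, blockDiagonalFromBlocks_mul]
  change blockDiagonalFromBlocks (fun k => T k + t k • vecMulVec (μ k) (μ k)
      + π k • vecMulVec (v k) (μ k) + π k • vecMulVec (μ k) (v k))
    (fun k => t k • μ k + π k • v k) (fun k => t k • μ k + π k • v k) t = _
  congr 1 <;> funext k
  · simp only [Pi.one_apply, Matrix.one_mul, Matrix.mul_one, one_mulVec, add_vecMulVec,
      smul_vecMulVec, vecMulVec_smul]
    abel
  all_goals simp [add_comm]

theorem gmm_differential_metric_general {n K : ℕ}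
    (π : Fin K → ℝ) (μ : Fin K → Fin n → ℝ) (Sig : Fin K → Matrix (Fin n) (Fin n) ℝ)
    (t : Fin K → ℝ) (v : Fin K → Fin n → ℝ) (T : Fin K → Matrix (Fin n) (Fin n) ℝ)
    (hπ : ∀ k, 0 < π k) (hSig : ∀ k, (Sig k).PosDef) :
    (1 / 2) * Matrix.trace (((gmmS π μ Sig)⁻¹ * gmmdS π μ t v T) ^ 2) =
      ∑ k : Fin K,
        ((1 / 2) * (t k / π k) ^ 2 + π k * (v k ⬝ᵥ ((Sig k)⁻¹ *ᵥ v k))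
          + (1 / 2) * Matrix.trace (((Sig k)⁻¹ * T k) ^ 2)) := by
  have hSig_det : ∀ k, IsUnit (Sig k).det := fun k => (hSig k).det_pos.ne'.isUnit
  have hL : IsUnit (blockDiagonalFromBlocks 1 μ 0 1).det := by
    simp [det_blockDiagonalFromBlocks_zero₂₁]
  have hR : IsUnit (blockDiagonalFromBlocks 1 0 μ 1).det := by
    simp [det_blockDiagonalFromBlocks_zero₁₂]
  rw [gmmS_eq_mul_mul, gmmdS_eq_mul_mul, trace_pow_inv_mul_conj hL hR,
    inv_blockDiagonalFromBlocks_zero_zero _ _ hSig_det fun k => (hπ k).ne',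
    blockDiagonalFromBlocks_mul, trace_blockDiagonalFromBlocks_sq, Finset.mul_sum]
  refine Finset.sum_congr rfl fun k _ => ?_
  have hπk := (hπ k).ne'
  simp only [Pi.zero_apply, Pi.inv_apply, zero_vecMulVec, zero_vecMul, zero_dotProduct,
    smul_zero, add_zero, zero_add, inv_smul_smul₀ hπk, mulVec_smul, smul_dotProduct,
    dotProduct_comm (v k), smul_eq_mul]
  field_simp
  ring

/-- The differential metric:
`(1/2) Tr((S⁻¹ dS)²) = Σₖ [ (1/2)(tₖ/πₖ)² + πₖ vₖᵀΣₖ⁻¹vₖ + (1/2) Tr((Σₖ⁻¹Tₖ)²) ]`. -/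
theorem gmm_differential_metric {n K : ℕ}
    (π : Fin K → ℝ) (μ : Fin K → Fin n → ℝ) (Sig : Fin K → Matrix (Fin n) (Fin n) ℝ)
    (t : Fin K → ℝ) (v : Fin K → Fin n → ℝ) (T : Fin K → Matrix (Fin n) (Fin n) ℝ)
    (hπ : ∀ k, 0 < π k) (hSig : ∀ k, (Sig k).PosDef) (hT : ∀ k, (T k).IsSymm) :
    (1 / 2) * Matrix.trace (((gmmS π μ Sig)⁻¹ * gmmdS π μ t v T) ^ 2) =
      ∑ k : Fin K,
        ((1 / 2) * (t k / π k) ^ 2 + π k * (v k ⬝ᵥ ((Sig k)⁻¹ *ᵥ v k))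
          + (1 / 2) * Matrix.trace (((Sig k)⁻¹ * T k) ^ 2)) :=
  gmm_differential_metric_general π μ Sig t v T hπ hSig
end

section
/- At any parameter point (π, μ, Σ) with π_k > 0, μ_k ∈ ℝⁿ, and Σ_k real symmetric positive definite n×n matrices, the Fréchet derivative of the map f : (π, μ, Σ) ↦ S(π, μ, Σ) is injective on tangent directions (t, v, T) with t_k ∈ ℝ, v_k ∈ ℝⁿ, and T_k real symmetric n×n matrices: if the directional derivative dS = [[blockdiag(T_k + t_k μ_kμ_kᵀ + π_k v_kμ_kᵀ + π_k μ_kv_kᵀ), dX],[dXᵀ, diag(t_k)]] (with dX the Kn×K block-diagonal matrix with k-th block t_k μ_k + π_k v_k) is the zero matrix, then t_k = 0, v_k = 0, and T_k = 0 for all k. -/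
open Matrix

/-!
Read off the blocks of `dS` from the bottom right: `dB = diag t` forces `t = 0`; then the
`k`-th block of `dX` is `πₖ vₖ`, so `v = 0` because `πₖ ≠ 0`; then the `k`-th block of `dA`
is just `Tₖ`.
-/

section

variable {n K : ℕ} {π : Fin K → ℝ} {μ : Fin K → Fin n → ℝ} {t : Fin K → ℝ}
  {v : Fin K → Fin n → ℝ} {T : Fin K → Matrix (Fin n) (Fin n) ℝ}

theorem gmmdS_inr_inr (k l : Fin K) :
    gmmdS π μ t v T (Sum.inr k) (Sum.inr l) = diagonal t k l :=
  rfl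

theorem gmmdS_inl_inr (i : Fin n) (k : Fin K) :
    gmmdS π μ t v T (Sum.inl (i, k)) (Sum.inr k) = t k * μ k i + π k * v k i := by
  simp [gmmdS, gmmdX]

theorem gmmdS_inl_inl (i j : Fin n) (k : Fin K) :
    gmmdS π μ t v T (Sum.inl (i, k)) (Sum.inl (j, k)) =
      (T k + t k • vecMulVec (μ k) (μ k) + π k • vecMulVec (v k) (μ k)
        + π k • vecMulVec (μ k) (v k)) i j := by
  simp [gmmdS, gmmdA]

end

theorem gmm_differential_injective_general {n K : ℕ}
    (π : Fin K → ℝ) (μ : Fin K → Fin n → ℝ)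
    (t : Fin K → ℝ) (v : Fin K → Fin n → ℝ) (T : Fin K → Matrix (Fin n) (Fin n) ℝ)
    (hπ : ∀ k, 0 < π k)
    (h : gmmdS π μ t v T = 0) :
    t = 0 ∧ v = 0 ∧ T = 0 := by
  obtain rfl : t = 0 := funext fun k => by
    simpa [gmmdS_inr_inr] using congrFun (congrFun h (Sum.inr k)) (Sum.inr k)
  obtain rfl : v = 0 := funext fun k => funext fun i => by
    simpa [gmmdS_inl_inr, (hπ k).ne'] using
      congrFun (congrFun h (Sum.inl (i, k))) (Sum.inr k)
  refine ⟨rfl, rfl, funext fun k => ext fun i j => ?_⟩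
  simpa [gmmdS_inl_inl] using congrFun (congrFun h (Sum.inl (i, k))) (Sum.inl (j, k))

/-- Injectivity of the differential of the embedding: at any parameter point with
`πₖ > 0` and `Σₖ` symmetric positive definite, if the directional derivative `dS`
in a tangent direction `(t, v, T)` (with each `Tₖ` symmetric) vanishes, then the
direction is zero. -/
theorem gmm_differential_injective {n K : ℕ}
    (π : Fin K → ℝ) (μ : Fin K → Fin n → ℝ) (Sig : Fin K → Matrix (Fin n) (Fin n) ℝ)
    (t : Fin K → ℝ) (v : Fin K → Fin n → ℝ) (T : Fin K → Matrix (Fin n) (Fin n) ℝ)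
    (hπ : ∀ k, 0 < π k) (hSig : ∀ k, (Sig k).PosDef) (hT : ∀ k, (T k).IsSymm)
    (h : gmmdS π μ t v T = 0) :
    t = 0 ∧ v = 0 ∧ T = 0 :=
  gmm_differential_injective_general π μ t v T hπ h
end
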